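/- For any complex numbers z, z': (1/8)|z - z'|² ≤ (1/(2π)) ∫₀^{2π} |ρ(Re(e^{iα} z)) - ρ(Re(e^{iα} z'))|² dα ≤ (1/4)|z - z'|², where ρ(a) = max(a,0). -/

import Mathlib

/-!
For reals `a, b` put `u = ρ a - ρ b` and `v = ρ (-a) - ρ (-b)`. Then `a - b = u - v` and
`u v ≤ 0` (`ρ` is monotone, `a ↦ ρ (-a)` antitone), so `u² + v² ≤ (a - b)² ≤ 2 (u² + v²)`.
Shifting `α` by `π` negates `Re (e^{iα} z)` and so turns `u` into `v`; hence `u²` and `v²`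
have the same integral over a period, while `∫₀^{2π} Re (e^{iα} w)² dα = π |w|²`.
-/

open Real Complex

section PosPart

variable {R : Type*} [CommRing R] [LinearOrder R] [IsStrictOrderedRing R]

theorem posPart_sub_mul_negPart_sub_nonpos (a b : R) : (a⁺ - b⁺) * (a⁻ - b⁻) ≤ 0 := by
  rcases le_total a b with hab | hab
  · exact mul_nonpos_of_nonpos_of_nonneg (sub_nonpos.2 (posPart_mono hab))
      (sub_nonneg.2 (negPart_anti hab))
  · exact mul_nonpos_of_nonneg_of_nonpos (sub_nonneg.2 (posPart_mono hab))
      (sub_nonpos.2 (negPart_anti hab))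

theorem sub_eq_posPart_sub_sub_negPart_sub (a b : R) : a - b = (a⁺ - b⁺) - (a⁻ - b⁻) := by
  conv_lhs => rw [← posPart_sub_negPart a, ← posPart_sub_negPart b]
  abel

theorem sq_posPart_sub_add_sq_negPart_sub_le (a b : R) :
    (a⁺ - b⁺) ^ 2 + (a⁻ - b⁻) ^ 2 ≤ (a - b) ^ 2 := by
  rw [sub_eq_posPart_sub_sub_negPart_sub a b]
  nlinarith [posPart_sub_mul_negPart_sub_nonpos a b]

theorem sq_sub_le_two_mul_sq_posPart_sub_add_sq_negPart_sub (a b : R) :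
    (a - b) ^ 2 ≤ 2 * ((a⁺ - b⁺) ^ 2 + (a⁻ - b⁻) ^ 2) := by
  rw [sub_eq_posPart_sub_sub_negPart_sub a b]
  nlinarith [sq_nonneg (a⁺ - b⁺ + (a⁻ - b⁻))]

end PosPart

theorem Function.Periodic.intervalIntegral_comp_add_right {E : Type*} [NormedAddCommGroup E]
    [NormedSpace ℝ E] {f : ℝ → E} {T : ℝ} (hf : Function.Periodic f T) (t d : ℝ) :
    ∫ x in t..t + T, f (x + d) = ∫ x in t..t + T, f x := by
  rw [intervalIntegral.integral_comp_add_right, add_right_comm, hf.intervalIntegral_add_eq]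

theorem Function.Periodic.intervalIntegral_add_comp_add_right {f : ℝ → ℝ} {T : ℝ}
    (hf : Function.Periodic f T) (hfc : Continuous f) (c : ℝ) :
    ∫ x in 0..T, f x + f (x + c) = 2 * ∫ x in 0..T, f x := by
  rw [intervalIntegral.integral_add (hfc.intervalIntegrable _ _)
    ((by fun_prop : Continuous fun x => f (x + c)).intervalIntegrable _ _),
    two_mul, ← zero_add T, hf.intervalIntegral_comp_add_right]

namespace Function.Antiperiodic

variable {f g : ℝ → ℝ} {c : ℝ}

theorem integral_sq_posPart_sub_add_sq_negPart_sub (hf : Antiperiodic f c) (hg : Antiperiodic g c)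
    (hfc : Continuous f) (hgc : Continuous g) :
    ∫ x in 0..2 * c, ((f x)⁺ - (g x)⁺) ^ 2 + ((f x)⁻ - (g x)⁻) ^ 2 =
      2 * ∫ x in 0..2 * c, ((f x)⁺ - (g x)⁺) ^ 2 := by
  have hper : Periodic (fun x => ((f x)⁺ - (g x)⁺) ^ 2) (2 * c) := fun x => by
    simp only [hf.periodic_two_mul x, hg.periodic_two_mul x]
  simpa only [hf _, hg _, posPart_neg] using
    hper.intervalIntegral_add_comp_add_right (by fun_prop) c

theorem two_mul_integral_sq_posPart_sub_le (hf : Antiperiodic f c) (hg : Antiperiodic g c)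
    (hfc : Continuous f) (hgc : Continuous g) (hc : 0 ≤ c) :
    2 * ∫ x in 0..2 * c, ((f x)⁺ - (g x)⁺) ^ 2 ≤ ∫ x in 0..2 * c, (f x - g x) ^ 2 := by
  rw [← integral_sq_posPart_sub_add_sq_negPart_sub hf hg hfc hgc]
  exact intervalIntegral.integral_mono_on (by positivity)
    (Continuous.intervalIntegrable (by fun_prop) _ _)
    (Continuous.intervalIntegrable (by fun_prop) _ _)
    fun x _ => sq_posPart_sub_add_sq_negPart_sub_le (f x) (g x)

theorem integral_sq_sub_le_four_mul_integral_sq_posPart_sub (hf : Antiperiodic f c)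
    (hg : Antiperiodic g c) (hfc : Continuous f) (hgc : Continuous g) (hc : 0 ≤ c) :
    ∫ x in 0..2 * c, (f x - g x) ^ 2 ≤ 4 * ∫ x in 0..2 * c, ((f x)⁺ - (g x)⁺) ^ 2 := by
  rw [show (4 : ℝ) = 2 * 2 by norm_num, mul_assoc,
    ← integral_sq_posPart_sub_add_sq_negPart_sub hf hg hfc hgc,
    ← intervalIntegral.integral_const_mul]
  exact intervalIntegral.integral_mono_on (by positivity)
    (Continuous.intervalIntegrable (by fun_prop) _ _)
    (Continuous.intervalIntegrable (by fun_prop) _ _)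
    fun x _ => sq_sub_le_two_mul_sq_posPart_sub_add_sq_negPart_sub (f x) (g x)

end Function.Antiperiodic

theorem re_exp_mul_I_mul_antiperiodic (w : ℂ) :
    Function.Antiperiodic (fun α : ℝ => (exp (α * I) * w).re) π := by
  intro α
  simp only [ofReal_add, exp_mul_I_antiperiodic _, neg_mul, neg_re]

theorem re_exp_mul_I_mul_eq_norm_mul_cos (w : ℂ) (α : ℝ) :
    (exp (α * I) * w).re = ‖w‖ * Real.cos (α + arg w) := by
  conv_lhs => rw [← norm_mul_exp_arg_mul_I w, mul_left_comm, ← Complex.exp_add, ← add_mul]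
  rw [← ofReal_add, re_ofReal_mul, exp_ofReal_mul_I_re]

theorem integral_sq_re_exp_mul_I_mul (w : ℂ) :
    ∫ α in (0 : ℝ)..2 * π, (exp (α * I) * w).re ^ 2 = π * ‖w‖ ^ 2 := by
  simp_rw [re_exp_mul_I_mul_eq_norm_mul_cos, mul_pow]
  rw [intervalIntegral.integral_const_mul,
    intervalIntegral.integral_comp_add_right (fun x => Real.cos x ^ 2), integral_cos_sq,
    add_comm (2 * π), Real.cos_add_two_pi, Real.sin_add_two_pi, zero_add]
  ring

theorem rectifier_phase_bilipschitz (z z' : ℂ) :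
    (1 / 8) * ‖z - z'‖ ^ 2 ≤
      (1 / (2 * π)) * ∫ α in (0 : ℝ)..(2 * π),
        |max ((Complex.exp (α * Complex.I) * z).re) 0 -
          max ((Complex.exp (α * Complex.I) * z').re) 0| ^ 2 ∧
    (1 / (2 * π)) * (∫ α in (0 : ℝ)..(2 * π),
        |max ((Complex.exp (α * Complex.I) * z).re) 0 -
          max ((Complex.exp (α * Complex.I) * z').re) 0| ^ 2) ≤
      (1 / 4) * ‖z - z'‖ ^ 2 := by
  have hJ : ∫ α in (0 : ℝ)..2 * π, ((exp (α * I) * z).re - (exp (α * I) * z').re) ^ 2 =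
      π * ‖z - z'‖ ^ 2 := by
    simpa only [mul_sub, sub_re] using integral_sq_re_exp_mul_I_mul (z - z')
  have hcont : ∀ w : ℂ, Continuous fun α : ℝ => (exp (α * I) * w).re := fun w => by fun_prop
  have hlo := (re_exp_mul_I_mul_antiperiodic z).integral_sq_sub_le_four_mul_integral_sq_posPart_sub
    (re_exp_mul_I_mul_antiperiodic z') (hcont z) (hcont z') pi_pos.le
  have hup := (re_exp_mul_I_mul_antiperiodic z).two_mul_integral_sq_posPart_sub_le
    (re_exp_mul_I_mul_antiperiodic z') (hcont z) (hcont z') pi_pos.le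
  simp only [posPart_def] at hlo hup
  simp only [sq_abs, one_div_mul_eq_div]
  have hπ : 0 < 2 * π := by positivity
  constructor
  · rw [le_div_iff₀ hπ]
    linarith
  · rw [div_le_iff₀ hπ]
    linarith
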